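/- arXiv:2309.12127 — 4 statements merged into one kernel-verified Lean document; each statement's English description precedes it below -/
import Mathlib

section
/- Let I be a directed partially ordered set and let {A_i, φ_{ij}} be a directed system of abelian groups indexed by I such that every A_i is a finitely generated abelian group. If the direct limit colim_{i ∈ I} A_i is the trivial group, then for every i ∈ I there exists j ≥ i such that the transition homomorphism φ_{ij} : A_i → A_j is the zero homomorphism. -/
/-!
Every element of `A i` dies in the trivial direct limit, hence is killed by some transition
map. A finite generating set of `A i` is killed by a single `f i j`, taking `j` an upper bound
of the finitely many stages involved, and a homomorphism vanishing on generators is zero.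
-/

namespace DirectedSystem

variable {ι : Type*} [Preorder ι] {G : ι → Type*}

section AddCommMonoid

variable [∀ i, AddCommMonoid (G i)] (f : ∀ i j, i ≤ j → G i →+ G j)
  [DirectedSystem G fun i j h => f i j h]

theorem map_eq_zero_of_le {i j k : ι} {hij : i ≤ j} {x : G i} (hx : f i j hij x = 0)
    (hjk : j ≤ k) : f i k (hij.trans hjk) x = 0 := by
  rw [← map_map' f hij hjk, hx, map_zero]

theorem exists_forall_mem_map_eq_zero [IsDirectedOrder ι] {i : ι} (s : Finset (G i))
    (hs : ∀ x ∈ s, ∃ j hij, f i j hij x = 0) : ∃ j hij, ∀ x ∈ s, f i j hij x = 0 := by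
  classical
  induction s using Finset.induction_on with
  | empty => exact ⟨i, le_rfl, by simp⟩
  | insert a s _ ih =>
    obtain ⟨j₁, hij₁, hj₁⟩ := ih fun x hx => hs x (Finset.mem_insert_of_mem hx)
    obtain ⟨j₂, _, hj₂⟩ := hs a (Finset.mem_insert_self a s)
    obtain ⟨k, hj₁k, hj₂k⟩ := exists_ge_ge j₁ j₂
    refine ⟨k, hij₁.trans hj₁k, fun x hx => ?_⟩
    rcases Finset.mem_insert.1 hx with rfl | hx
    · exact map_eq_zero_of_le f hj₂ hj₂k
    · exact map_eq_zero_of_le f (hj₁ x hx) hj₁k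

end AddCommMonoid

section AddCommGroup

variable [IsDirectedOrder ι] [∀ i, AddCommGroup (G i)] (f : ∀ i j, i ≤ j → G i →+ G j)
  [DirectedSystem G fun i j h => f i j h]

theorem exists_map_eq_zero_of_fg {i : ι} (hfg : AddGroup.FG (G i))
    (h : ∀ x : G i, ∃ j hij, f i j hij x = 0) : ∃ j hij, f i j hij = 0 := by
  obtain ⟨s, hs⟩ := hfg.out
  obtain ⟨j, hij, hj⟩ := exists_forall_mem_map_eq_zero f s fun x _ => h x
  exact ⟨j, hij, AddMonoidHom.eq_of_eqOn_dense hs hj⟩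

end AddCommGroup

end DirectedSystem

/-- Converse direction of part (1) of the paper's Lemma on filtered systems, for
finitely generated abelian groups: if the direct limit is trivial, then every
transition map is eventually zero. -/
theorem eventually_zero_of_directLimit_trivial
    {ι : Type*} [PartialOrder ι] [IsDirected ι (· ≤ ·)] [DecidableEq ι]
    (A : ι → Type*) [∀ i, AddCommGroup (A i)]
    (hfg : ∀ i, AddGroup.FG (A i))
    (f : ∀ i j, i ≤ j → A i →+ A j)
    [DirectedSystem A fun i j h => f i j h]
    (h : Subsingleton (AddCommGroup.DirectLimit A f)) :
    ∀ i : ι, ∃ j : ι, ∃ hij : i ≤ j, f i j hij = 0 := fun i =>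
  DirectedSystem.exists_map_eq_zero_of_fg f (hfg i) fun x =>
    AddCommGroup.DirectLimit.of.zero_exact i x (Subsingleton.elim _ _)
end

section
/- Let I be a directed partially ordered set and let {A_i, φ_{ij}} and {B_i, ψ_{ij}} be two directed systems of abelian groups indexed by the same poset I, with every A_i a finitely generated abelian group. Suppose that for each comparable pair i ≤ j in I there exist group isomorphisms α : A_i ≅ B_i and β : A_j ≅ B_j (possibly depending on the pair (i,j), and not required to be natural) such that β ∘ φ_{ij} = ψ_{ij} ∘ α. Then the direct limit colim_{i ∈ I} A_i is trivial if and only if the direct limit colim_{i ∈ I} B_i is trivial. -/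
/-!
For finitely generated groups, the direct limit is trivial exactly when for every `i` some
transition map `φ i j` out of `A i` is zero. Whether a given map is zero is invariant under
composing with isomorphisms on both sides, so this criterion cannot see that the pairwise
isomorphisms are not natural.
-/

open Filter

theorem AddMonoidHom.eq_zero_iff_of_comm {M N M' N' : Type*} [AddZeroClass M] [AddZeroClass N]
    [AddZeroClass M'] [AddZeroClass N'] {f : M →+ N} {g : M' →+ N'} (α : M ≃+ M') (β : N ≃+ N')
    (h : ∀ a, β (f a) = g (α a)) : f = 0 ↔ g = 0 := by
  simp only [DFunLike.ext_iff, AddMonoidHom.zero_apply, ← β.map_eq_zero_iff, h]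
  exact (α.surjective.forall (p := fun x => g x = 0)).symm

namespace AddCommGroup.DirectLimit

variable {ι : Type*} [Preorder ι] [DecidableEq ι] {G : ι → Type*} [∀ i, AddCommMonoid (G i)]
  {f : ∀ i j, i ≤ j → G i →+ G j}

theorem subsingleton_of_forall_exists_map_eq_zero (hf : ∀ i, ∃ j, ∃ hij : i ≤ j, f i j hij = 0) :
    Subsingleton (DirectLimit G f) := by
  have hid : AddMonoidHom.id (DirectLimit G f) = 0 := by
    refine hom_ext _ fun i => AddMonoidHom.ext fun x => ?_
    obtain ⟨j, hij, hj⟩ := hf i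
    simp only [AddMonoidHom.comp_apply, AddMonoidHom.zero_apply, ← of_f hij x, hj, map_zero]
  exact subsingleton_of_forall_eq 0 (DFunLike.congr_fun hid)

variable [IsDirectedOrder ι] [DirectedSystem G fun i j h => f i j h]

theorem exists_map_eq_zero_of_subsingleton [Subsingleton (DirectLimit G f)] (i : ι)
    [AddMonoid.FG (G i)] : ∃ j, ∃ hij : i ≤ j, f i j hij = 0 := by
  have : Nonempty ι := ⟨i⟩
  obtain ⟨S, hS, hSfin⟩ := AddMonoid.fg_iff.mp ‹_›
  -- an element killed at stage `k` stays killed at every `j ≥ k`, so finitely many generators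
  -- are killed simultaneously
  have hkill : ∀ s, ∀ᶠ j in atTop, ∀ hij : i ≤ j, f i j hij s = 0 := by
    intro s
    obtain ⟨k, hik, hk⟩ := of.zero_exact i s (Subsingleton.elim (of G f i s) 0)
    filter_upwards [eventually_ge_atTop k] with j hkj hij
    rw [← DirectedSystem.map_map (f := fun i j h => f i j h) hik hkj, hk, map_zero]
  obtain ⟨j, hij, hj⟩ := ((eventually_ge_atTop i).and
    ((eventually_all_finite hSfin).2 fun s _ => hkill s)).exists
  exact ⟨j, hij, AddMonoidHom.eq_of_eqOn_denseM hS fun s hs => hj s hs hij⟩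

theorem subsingleton_iff_forall_exists_map_eq_zero [∀ i, AddMonoid.FG (G i)] :
    Subsingleton (DirectLimit G f) ↔ ∀ i, ∃ j, ∃ hij : i ≤ j, f i j hij = 0 :=
  ⟨fun _ i => exists_map_eq_zero_of_subsingleton i, subsingleton_of_forall_exists_map_eq_zero⟩

end AddCommGroup.DirectLimit

/-- Part (2) of the paper's Lemma on filtered systems, for finitely generated abelian
groups: if two directed systems are pairwise (non-naturally) isomorphic, then one
direct limit is trivial iff the other is. -/
theorem directLimit_trivial_iff_of_pairwise_iso
    {ι : Type*} [PartialOrder ι] [IsDirected ι (· ≤ ·)] [DecidableEq ι]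
    (A B : ι → Type*) [∀ i, AddCommGroup (A i)] [∀ i, AddCommGroup (B i)]
    (hfg : ∀ i, AddGroup.FG (A i))
    (f : ∀ i j, i ≤ j → A i →+ A j)
    (g : ∀ i j, i ≤ j → B i →+ B j)
    [DirectedSystem A fun i j h => f i j h]
    [DirectedSystem B fun i j h => g i j h]
    (hiso : ∀ i j (hij : i ≤ j), ∃ (α : A i ≃+ B i) (β : A j ≃+ B j),
      ∀ a : A i, β (f i j hij a) = g i j hij (α a)) :
    Subsingleton (AddCommGroup.DirectLimit A f) ↔
      Subsingleton (AddCommGroup.DirectLimit B g) := by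
  have hfgB (i : ι) : AddGroup.FG (B i) := by
    obtain ⟨α, -, -⟩ := hiso i i le_rfl
    exact AddGroup.fg_of_surjective (f := α.toAddMonoidHom) α.surjective
  rw [AddCommGroup.DirectLimit.subsingleton_iff_forall_exists_map_eq_zero,
    AddCommGroup.DirectLimit.subsingleton_iff_forall_exists_map_eq_zero]
  refine forall_congr' fun i => exists_congr fun j => exists_congr fun hij => ?_
  obtain ⟨α, β, hcomm⟩ := hiso i j hij
  exact AddMonoidHom.eq_zero_iff_of_comm α β hcomm
end

section
/- Let 𝒞 be a category with a zero object, let I be a directed partially ordered set regarded as a category, and let F : I → 𝒞 be a functor such that for every i ∈ I there exists j ≥ i for which the transition morphism F(i ≤ j) : F(i) → F(j) is the zero morphism. If the colimit of F exists in 𝒞, then the colimit object is a zero object of 𝒞. -/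
/-!
A zero object provides zero morphisms. Every colimit leg `ι i` factors as
`F.map (i ≤ j) ≫ ι j`, and the transition morphism is zero, so all legs vanish; by the
uniqueness part of the universal property the identity of the colimit is then zero.
-/

open CategoryTheory CategoryTheory.Limits

namespace CategoryTheory.Limits

variable {C : Type*} [Category C] [HasZeroMorphisms C] {J : Type*} [Category J] {F : J ⥤ C}

lemma Cocone.ι_app_eq_zero_of_map_eq_zero (c : Cocone F) {i j : J} (f : i ⟶ j)
    (hf : F.map f = 0) : c.ι.app i = 0 := by
  rw [← c.w f, hf, zero_comp]

lemma IsColimit.isZero_pt_of_ι_app_eq_zero {c : Cocone F} (hc : IsColimit c)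
    (h : ∀ j, c.ι.app j = 0) : IsZero c.pt :=
  (IsZero.iff_id_eq_zero c.pt).2 <| hc.hom_ext fun j => by rw [h, zero_comp, zero_comp]

end CategoryTheory.Limits

theorem colimit_isZero_of_eventually_zero_general
    {C : Type*} [Category C] [HasZeroObject C]
    {I : Type*} [PartialOrder I]
    (F : I ⥤ C) [HasColimit F]
    (h : ∀ i : I, ∃ j : I, ∃ hij : i ≤ j,
      ∃ Z : C, IsZero Z ∧ ∃ (p : F.obj i ⟶ Z) (q : Z ⟶ F.obj j),
        F.map (homOfLE hij) = p ≫ q) :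
    IsZero (colimit F) := by
  let _ := HasZeroObject.zeroMorphismsOfZeroObject (C := C)
  refine (colimit.isColimit F).isZero_pt_of_ι_app_eq_zero fun i => ?_
  obtain ⟨j, hij, Z, hZ, p, q, hpq⟩ := h i
  refine (colimit.cocone F).ι_app_eq_zero_of_map_eq_zero (homOfLE hij) ?_
  rw [hpq, hZ.eq_zero_of_src q, comp_zero]

/-- Forward direction of part (1) of the paper's Lemma on filtered systems, for an
ordinary category with a zero object: if every transition morphism eventually factors
through a zero object, then the colimit (if it exists) is a zero object. -/
theorem colimit_isZero_of_eventually_zero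
    {C : Type*} [Category C] [HasZeroObject C]
    {I : Type*} [PartialOrder I] [IsDirected I (· ≤ ·)]
    (F : I ⥤ C) [HasColimit F]
    (h : ∀ i : I, ∃ j : I, ∃ hij : i ≤ j,
      ∃ Z : C, IsZero Z ∧ ∃ (p : F.obj i ⟶ Z) (q : Z ⟶ F.obj j),
        F.map (homOfLE hij) = p ≫ q) :
    IsZero (colimit F) :=
  colimit_isZero_of_eventually_zero_general F h
end

section
/- Let 𝒞 be a category with a zero object, let I be a directed partially ordered set regarded as a category, and let F, G : I → 𝒞 be functors admitting colimits, such that for every i ∈ I the object F(i) is compact, i.e. Hom_𝒞(F(i), −) : 𝒞 → Set preserves filtered colimits. Suppose that for each comparable pair i ≤ j in I there exist isomorphisms α : F(i) ≅ G(i) and β : F(j) ≅ G(j) (possibly depending on the pair (i,j), and not required to be natural) such that β ∘ F(i ≤ j) = G(i ≤ j) ∘ α. Then the colimit of F is a zero object if and only if the colimit of G is a zero object. -/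
/-!
Both colimits vanish iff the transition maps are eventually zero, i.e. every `i` admits `i ≤ j`
with the map at `i ≤ j` zero; the pairwise isomorphisms show that `F(i ≤ j) = 0 ↔ G(i ≤ j) = 0`.
If the colimit of `G` is zero, the map `α : F(i) ≅ G(i)` dies in it, so by compactness of `F(i)`
it already dies after some transition map, which is then zero since `α` is invertible.
-/

open CategoryTheory CategoryTheory.Limits Opposite

universe w v u

section

variable {C : Type u} [Category.{v} C] [HasZeroMorphisms C]

lemma eq_zero_iff_of_iso_comm {X X' Y Y' : C} {f : X ⟶ Y} {g : X' ⟶ Y'} (α : X ≅ X') (β : Y ≅ Y')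
    (w : f ≫ β.hom = α.hom ≫ g) : f = 0 ↔ g = 0 := by
  rw [← comp_eq_zero_iff_of_epi α.hom, ← w, ← cancel_mono β.hom, zero_comp]

lemma isZero_colimit_of_forall_exists_map_eq_zero {I : Type*} [Category I] (G : I ⥤ C)
    [HasColimit G] (h : ∀ i, ∃ (j : I) (f : i ⟶ j), G.map f = 0) : IsZero (colimit G) := by
  refine (IsZero.iff_id_eq_zero _).mpr (colimit.hom_ext fun i => ?_)
  obtain ⟨j, f, hf⟩ := h i
  rw [Category.comp_id, comp_zero, ← colimit.w G f, hf, zero_comp]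

lemma exists_comp_map_eq_zero_of_isZero_colimit {I : Type w} [SmallCategory I]
    [IsFilteredOrEmpty I] (G : I ⥤ C) [HasColimit G] (hz : IsZero (colimit G)) {X : C}
    [PreservesFilteredColimitsOfSize.{w, w} (coyoneda.obj (op X))] {i : I} (x : X ⟶ G.obj i) :
    ∃ (j : I) (f : i ⟶ j), x ≫ G.map f = 0 := by
  have : IsFiltered I := { nonempty := ⟨i⟩ }
  have hc := isColimitOfPreserves (coyoneda.obj (op X)) (colimit.isColimit G)
  have hx : x ≫ colimit.ι G i = (0 : X ⟶ G.obj i) ≫ colimit.ι G i := hz.eq_of_tgt _ _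
  obtain ⟨j, f, hf⟩ := (Types.FilteredColimit.isColimit_eq_iff' hc x (0 : X ⟶ G.obj i)).mp hx
  exact ⟨j, f, by simpa using hf⟩

end

/-- Part (2) of the paper's Lemma on filtered systems, for an ordinary category with a
zero object: if two directed systems with compact objects (on the `F` side) are
pairwise (non-naturally) isomorphic, then the colimit of `F` is a zero object iff the
colimit of `G` is. -/
theorem colimit_isZero_iff_of_pairwise_iso
    {C : Type u} [Category.{v} C] [HasZeroObject C]
    {I : Type w} [PartialOrder I] [IsDirected I (· ≤ ·)]
    (F G : I ⥤ C) [HasColimit F] [HasColimit G]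
    (hcpt : ∀ i : I,
      PreservesFilteredColimitsOfSize.{w, w} (coyoneda.obj (op (F.obj i))))
    (hiso : ∀ i j (hij : i ≤ j), ∃ (α : F.obj i ≅ G.obj i) (β : F.obj j ≅ G.obj j),
      F.map (homOfLE hij) ≫ β.hom = α.hom ≫ G.map (homOfLE hij)) :
    IsZero (colimit F) ↔ IsZero (colimit G) := by
  let := HasZeroObject.zeroMorphismsOfZeroObject (C := C)
  have map_eq_zero_iff {i j : I} (f : i ⟶ j) : F.map f = 0 ↔ G.map f = 0 := by
    obtain ⟨α, β, w⟩ := hiso i j (leOfHom f)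
    exact eq_zero_iff_of_iso_comm α β w
  constructor
  · intro hF
    refine isZero_colimit_of_forall_exists_map_eq_zero G fun i => ?_
    obtain ⟨j, f, hf⟩ := exists_comp_map_eq_zero_of_isZero_colimit F hF (𝟙 (F.obj i))
    exact ⟨j, f, (map_eq_zero_iff f).mp (by simpa using hf)⟩
  · intro hG
    refine isZero_colimit_of_forall_exists_map_eq_zero F fun i => ?_
    obtain ⟨α, -, -⟩ := hiso i i le_rfl
    obtain ⟨j, f, hf⟩ := exists_comp_map_eq_zero_of_isZero_colimit G hG α.hom
    exact ⟨j, f, (map_eq_zero_iff f).mpr ((comp_eq_zero_iff_of_epi α.hom).mp hf)⟩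
end
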